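/- arXiv:2503.05219 — 7 statements merged into one kernel-verified Lean document; each statement's English description precedes it below -/
import Mathlib

section
/- For all real numbers x, y ≥ 0 and r ≥ 0 with n = ⌊r⌋, one has (x+y)^r ≤ x^r + C(r,1)·x^{r-1}·y + C(r,2)·x^{r-2}·y^2 + ⋯ + C(r,n)·x^{r-n}·y^n + y^r, where C(r,k) = r(r-1)⋯(r-k+1)/k! is the generalized binomial coefficient (for r < 1 the inequality reads (x+y)^r ≤ x^r + y^r). -/
/-!
Induction on `⌊r⌋`. As a function of `y ≥ 0`, the gap between the right- and left-hand sides
vanishes at `y = 0`, and since `k * C(r, k) = r * C(r - 1, k - 1)` its derivative is `r` times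
the gap for the exponent `r - 1`, which is nonnegative by induction. The base case
`0 ≤ r ≤ 1` is the subadditivity of `t ↦ t ^ r`.
-/

open Finset

/-- Generalized binomial coefficient C(r,k) = r(r-1)⋯(r-k+1)/k!. -/
noncomputable def genBinom (r : ℝ) (k : ℕ) : ℝ :=
  (∏ i ∈ Finset.range k, (r - i)) / (Nat.factorial k : ℝ)

noncomputable def binomTrunc (r x y : ℝ) (n : ℕ) : ℝ :=
  ∑ k ∈ range (n + 1), genBinom r k * x ^ (r - k) * y ^ k

noncomputable def binomGap (r x y : ℝ) (n : ℕ) : ℝ :=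
  binomTrunc r x y n + y ^ r - (x + y) ^ r

lemma genBinom_zero (r : ℝ) : genBinom r 0 = 1 := by
  simp [genBinom]

lemma succ_mul_genBinom_succ (r : ℝ) (k : ℕ) :
    (k + 1) * genBinom r (k + 1) = r * genBinom (r - 1) k := by
  have hprod : ∏ i ∈ range (k + 1), (r - i) = r * ∏ i ∈ range k, (r - 1 - i) := by
    rw [prod_range_succ', mul_comm]
    push_cast
    simp only [sub_zero, sub_add_eq_sub_sub_swap]
  simp only [genBinom, hprod, Nat.factorial_succ]
  push_cast
  field_simp

lemma binomTrunc_eq_add_sum_Icc (r x y : ℝ) (n : ℕ) :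
    binomTrunc r x y n = x ^ r + ∑ k ∈ Icc 1 n, genBinom r k * x ^ (r - k) * y ^ k := by
  rw [binomTrunc, range_eq_Ico, sum_eq_sum_Ico_succ_bot n.succ_pos]
  simp [genBinom_zero, Ico_add_one_right_eq_Icc]

lemma hasDerivAt_binomTrunc_succ (r x y : ℝ) (n : ℕ) :
    HasDerivAt (fun t ↦ binomTrunc r x t (n + 1)) (r * binomTrunc (r - 1) x y n) y := by
  have h := HasDerivAt.fun_sum (u := range (n + 2)) fun k _ ↦
    (hasDerivAt_pow k y).const_mul (genBinom r k * x ^ (r - k))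
  refine (h.congr_deriv ?_).congr_of_eventuallyEq (.of_forall fun t ↦ ?_)
  · rw [sum_range_succ', binomTrunc, mul_sum]
    refine ((congrArg₂ _ (sum_congr rfl fun k _ ↦ ?_) (by simp)).trans (add_zero _))
    have hb := succ_mul_genBinom_succ r k
    push_cast
    rw [show r - (k + 1) = r - 1 - k by ring]
    linear_combination (x ^ (r - 1 - k) * y ^ k) * hb
  · simp only [binomTrunc, mul_assoc]

lemma binomTrunc_zero_right (r x : ℝ) (n : ℕ) : binomTrunc r x 0 n = x ^ r := by
  simp [binomTrunc, sum_range_succ', genBinom_zero]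

lemma binomGap_zero_right {r : ℝ} (hr : 0 < r) (x : ℝ) (n : ℕ) : binomGap r x 0 n = 0 := by
  simp [binomGap, binomTrunc_zero_right, Real.zero_rpow hr.ne']

lemma continuous_binomGap {r : ℝ} (hr : 0 ≤ r) (x : ℝ) (n : ℕ) :
    Continuous fun t ↦ binomGap r x t n := by
  have := Real.continuous_rpow_const hr
  unfold binomGap binomTrunc
  fun_prop

lemma hasDerivAt_binomGap_succ {r x t : ℝ} (hx : 0 ≤ x) (ht : 0 < t) (n : ℕ) :
    HasDerivAt (fun s ↦ binomGap r x s (n + 1)) (r * binomGap (r - 1) x t n) t := by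
  have hpow : HasDerivAt (fun s ↦ s ^ r) (r * t ^ (r - 1)) t :=
    Real.hasDerivAt_rpow_const (.inl ht.ne')
  have hshift : HasDerivAt (fun s ↦ (x + s) ^ r) (r * (x + t) ^ (r - 1)) t := by
    simpa using ((hasDerivAt_id t).const_add x).rpow_const (p := r) (.inl (by positivity))
  refine (((hasDerivAt_binomTrunc_succ r x t n).add hpow).sub hshift).congr_deriv ?_
  rw [binomGap]
  ring

theorem binomGap_nonneg (n : ℕ) {r x y : ℝ} (hx : 0 ≤ x) (hy : 0 ≤ y) (hnr : n ≤ r)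
    (hrn : r ≤ n + 1) : 0 ≤ binomGap r x y n := by
  induction n generalizing r y with
  | zero =>
    have h := Real.rpow_add_le_add_rpow hx hy (by simpa using hnr) (by simpa using hrn)
    simpa [binomGap, binomTrunc, genBinom_zero] using h
  | succ n ih =>
    push_cast at hnr hrn
    have hr : 0 < r := by linarith [n.cast_nonneg (α := ℝ)]
    have hmono : MonotoneOn (fun s ↦ binomGap r x s (n + 1)) (Set.Ici 0) := by
      refine monotoneOn_of_hasDerivWithinAt_nonneg (f' := fun t ↦ r * binomGap (r - 1) x t n)
        (convex_Ici 0)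
        (continuous_binomGap hr.le x _).continuousOn
        (fun t ht ↦ ?_) (fun t ht ↦ ?_)
      all_goals rw [interior_Ici] at ht
      · exact (hasDerivAt_binomGap_succ hx ht n).hasDerivWithinAt
      · exact mul_nonneg hr.le (ih (le_of_lt ht) (by linarith) (by linarith))
    simpa [binomGap_zero_right hr] using hmono Set.self_mem_Ici hy hy

theorem stmt0 (x y r : ℝ) (hx : 0 ≤ x) (hy : 0 ≤ y) (hr : 0 ≤ r) :
    (x + y) ^ r ≤
      x ^ r + (∑ k ∈ Finset.Icc 1 ⌊r⌋₊, genBinom r k * x ^ (r - k) * y ^ k) + y ^ r := by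
  have h := binomGap_nonneg ⌊r⌋₊ hx hy (Nat.floor_le hr) (Nat.lt_floor_add_one r).le
  rw [binomGap, binomTrunc_eq_add_sum_Icc] at h
  linarith
end

section
/- Let H be an n×n real upper triangular matrix with H_{1,1} ≥ 0 and H_{i,i} > 0 for all i ≥ 2. Then there exists a row vector v = (v_1, …, v_n) with all entries v_i > 0 such that every entry of the row vector v·H is nonnegative. -/
noncomputable def auxv (n : ℕ) (H : Matrix (Fin n) (Fin n) ℝ) : ℕ → ℝ
  | k =>
    if hk : k < n ∧ 0 < k then
      max 1 ((1 - ∑ i : Fin k,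
          auxv n H i.val * H ⟨i.val, lt_trans i.isLt hk.1⟩ ⟨k, hk.1⟩) /
        H ⟨k, hk.1⟩ ⟨k, hk.1⟩)
    else 1
  decreasing_by exact i.isLt

lemma auxv_ge_one (n : ℕ) (H : Matrix (Fin n) (Fin n) ℝ) (k : ℕ) :
    1 ≤ auxv n H k := by
  rw [auxv]
  split
  · exact le_max_left _ _
  · exact le_refl 1

theorem stmt2 (n : ℕ) (H : Matrix (Fin n) (Fin n) ℝ)
    (htri : ∀ i j : Fin n, j < i → H i j = 0)
    (h11 : ∀ h : 0 < n, 0 ≤ H ⟨0, h⟩ ⟨0, h⟩)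
    (hdiag : ∀ i : Fin n, 0 < i.val → 0 < H i i) :
    ∃ v : Fin n → ℝ, (∀ i, 0 < v i) ∧ ∀ j, 0 ≤ Matrix.vecMul v H j := by
  set v : Fin n → ℝ := fun i => auxv n H i.val with hv
  refine ⟨v, fun i => lt_of_lt_of_le one_pos (auxv_ge_one n H i.val), fun j => ?_⟩
  have hsum : Matrix.vecMul v H j = ∑ i : Fin n, v i * H i j := by
    simp [Matrix.vecMul, dotProduct]
  rw [hsum]
  -- restrict sum to Iic j
  have h1 : ∑ i : Fin n, v i * H i j = ∑ i ∈ Finset.Iic j, v i * H i j := by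
    refine (Finset.sum_subset (Finset.subset_univ _) ?_).symm
    intro x _ hx
    rw [htri x j (by simpa [Finset.mem_Iic, not_le] using hx), mul_zero]
  have h2 : ∑ i ∈ Finset.Iic j, v i * H i j
      = (∑ i ∈ Finset.Iio j, v i * H i j) + v j * H j j := by
    rw [← Finset.Iio_insert, Finset.sum_insert (by simp)]
    ring
  have h3 : ∑ i ∈ Finset.Iio j, v i * H i j
      = ∑ i : Fin j.val, auxv n H i.val * H ⟨i.val, lt_trans i.isLt j.isLt⟩ j := by
    refine Finset.sum_bij' (fun i hi => (⟨i.val, Fin.lt_def.mp (Finset.mem_Iio.mp hi)⟩ : Fin j.val))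
      (fun i _ => (⟨i.val, lt_trans i.isLt j.isLt⟩ : Fin n)) ?_ ?_ ?_ ?_ ?_
    · intro a ha; exact Finset.mem_univ _
    · intro a ha; exact Finset.mem_Iio.mpr (Fin.mk_lt_of_lt_val a.isLt)
    · intro a ha; rfl
    · intro a ha; rfl
    · intro a ha; rfl
  rw [h1, h2, h3]
  rcases Nat.eq_zero_or_pos j.val with hj0 | hjpos
  · have hjeq : j = ⟨0, j.pos⟩ := Fin.ext hj0
    have : (∑ i : Fin j.val, auxv n H i.val * H ⟨i.val, lt_trans i.isLt j.isLt⟩ j) = 0 := by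
      rw [Finset.sum_eq_zero]
      intro i _
      exact absurd i.isLt (by omega)
    rw [this, zero_add]
    have := h11 j.pos
    rw [← hjeq] at this
    exact mul_nonneg (le_of_lt (lt_of_lt_of_le one_pos (auxv_ge_one n H j.val))) this
  · set S := ∑ i : Fin j.val, auxv n H i.val * H ⟨i.val, lt_trans i.isLt j.isLt⟩ j with hS
    have hHd : 0 < H j j := hdiag j hjpos
    have hveq : v j = max 1 ((1 - S) / H j j) := by
      show auxv n H j.val = _
      rw [auxv]
      rw [dif_pos ⟨j.isLt, hjpos⟩]
    have : (1 - S) / H j j ≤ v j := hveq ▸ le_max_right _ _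
    have h4 : 1 - S ≤ v j * H j j := by
      rw [div_le_iff₀ hHd] at this
      linarith
    linarith
end

section
/- For every real α ≥ 2 there exists a constant C_α > 0 such that for all real x and y: |x+y|^α ≥ |x|^α + α·|x|^{α-2}·x·y + C_α·|y|^α (with the convention that |x|^{α-2}·x = 0 when x = 0). -/
/-!
Write `φ(s) = |s|^(α-2) s`, so that `α φ` is the derivative of `|s|^α`. Fix `x` and let
`ψ(y) = |x+y|^α - |x|^α - α φ(x) y - c |y|^α` with `c = 2^(1-α)`. Then `ψ(0) = 0` and
`ψ'(y) = α (φ(x+y) - φ(x) - c φ(y))`, which has the sign of `y`: this is a case analysis on the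
signs of `x` and `x + y`, using superadditivity of `t ↦ t^(α-1)` on `[0, ∞)` and, when `x` and
`x + y` have opposite signs, `max(a, b) ≥ (a + b)/2`. Hence `ψ` is minimal at `0`.
-/

open Real Set

theorem inv_two_rpow_mul_rpow_add_le {q a b : ℝ} (hq : 0 ≤ q) (ha : 0 ≤ a) (hb : 0 ≤ b) :
    2⁻¹ ^ q * (a + b) ^ q ≤ a ^ q + b ^ q := by
  rw [← mul_rpow (by norm_num) (add_nonneg ha hb)]
  rcases le_total a b with hab | hab
  · calc (2⁻¹ * (a + b)) ^ q ≤ b ^ q := rpow_le_rpow (by positivity) (by linarith) hq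
      _ ≤ a ^ q + b ^ q := le_add_of_nonneg_left (rpow_nonneg ha q)
  · calc (2⁻¹ * (a + b)) ^ q ≤ a ^ q := rpow_le_rpow (by positivity) (by linarith) hq
      _ ≤ a ^ q + b ^ q := le_add_of_nonneg_right (rpow_nonneg hb q)

noncomputable def signedRpow (q s : ℝ) : ℝ := |s| ^ (q - 1) * s

section SignedRpow

variable {q : ℝ}

@[simp]
theorem signedRpow_neg (s : ℝ) : signedRpow q (-s) = -signedRpow q s := by
  simp [signedRpow]

theorem signedRpow_of_nonneg (hq : q ≠ 0) {s : ℝ} (hs : 0 ≤ s) : signedRpow q s = s ^ q := by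
  rcases hs.eq_or_lt with rfl | hs
  · simp [signedRpow, zero_rpow hq]
  · rw [signedRpow, abs_of_pos hs, rpow_sub_one hs.ne', div_mul_cancel₀ _ hs.ne']

theorem signedRpow_of_nonpos (hq : q ≠ 0) {s : ℝ} (hs : s ≤ 0) : signedRpow q s = -(-s) ^ q := by
  rw [← signedRpow_of_nonneg hq (neg_nonneg.2 hs), signedRpow_neg, neg_neg]

theorem hasDerivAt_abs_rpow_eq_signedRpow (x : ℝ) {p : ℝ} (hp : 1 < p) :
    HasDerivAt (fun x : ℝ ↦ |x| ^ p) (p * signedRpow (p - 1) x) x := by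
  simpa [signedRpow, sub_sub, one_add_one_eq_two, mul_assoc] using hasDerivAt_abs_rpow x hp

theorem inv_two_rpow_mul_signedRpow_le_sub (hq : 1 ≤ q) (x : ℝ) {y : ℝ} (hy : 0 ≤ y) :
    2⁻¹ ^ q * signedRpow q y ≤ signedRpow q (x + y) - signedRpow q x := by
  have hq0 : q ≠ 0 := by positivity
  have hc : 2⁻¹ ^ q ≤ (1 : ℝ) := rpow_le_one (by norm_num) (by norm_num) (by positivity)
  have hyq : 0 ≤ y ^ q := rpow_nonneg hy q
  rw [signedRpow_of_nonneg hq0 hy]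
  rcases le_total 0 x with hx | hx
  · rw [signedRpow_of_nonneg hq0 hx, signedRpow_of_nonneg hq0 (add_nonneg hx hy)]
    nlinarith [add_rpow_le_rpow_add hx hy hq]
  rcases le_total 0 (x + y) with hxy | hxy
  · rw [signedRpow_of_nonpos hq0 hx, signedRpow_of_nonneg hq0 hxy, sub_neg_eq_add]
    simpa using inv_two_rpow_mul_rpow_add_le (by positivity) hxy (neg_nonneg.2 hx)
  · rw [signedRpow_of_nonpos hq0 hx, signedRpow_of_nonpos hq0 hxy]
    have hsuper := add_rpow_le_rpow_add hy (neg_nonneg.2 hxy) hq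
    rw [show y + -(x + y) = -x by ring] at hsuper
    nlinarith

theorem sub_le_inv_two_rpow_mul_signedRpow (hq : 1 ≤ q) (x : ℝ) {y : ℝ} (hy : y ≤ 0) :
    signedRpow q (x + y) - signedRpow q x ≤ 2⁻¹ ^ q * signedRpow q y := by
  have h := inv_two_rpow_mul_signedRpow_le_sub hq (-x) (neg_nonneg.2 hy)
  rw [← neg_add, signedRpow_neg, signedRpow_neg, signedRpow_neg] at h
  linarith

end SignedRpow

theorem le_of_hasDerivAt_nonpos_left_nonneg_right {f f' : ℝ → ℝ} {a : ℝ}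
    (hf : ∀ y, HasDerivAt f (f' y) y) (hleft : ∀ y < a, f' y ≤ 0) (hright : ∀ y, a < y → 0 ≤ f' y)
    (y : ℝ) : f a ≤ f y := by
  have hdiff : Differentiable ℝ f := fun y ↦ (hf y).differentiableAt
  rcases le_total a y with hay | hya
  · refine monotoneOn_of_deriv_nonneg (convex_Ici a) hdiff.continuous.continuousOn
      hdiff.differentiableOn (fun z hz ↦ ?_) self_mem_Ici hay hay
    rw [interior_Ici] at hz
    exact (hf z).deriv ▸ hright z hz
  · refine antitoneOn_of_deriv_nonpos (convex_Iic a) hdiff.continuous.continuousOn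
      hdiff.differentiableOn (fun z hz ↦ ?_) hya self_mem_Iic hya
    rw [interior_Iic] at hz
    exact (hf z).deriv ▸ hleft z hz

theorem rpow_add_signedRpow_mul_add_le_abs_add_rpow {p : ℝ} (hp : 2 ≤ p) (x y : ℝ) :
    |x| ^ p + p * signedRpow (p - 1) x * y + 2⁻¹ ^ (p - 1) * |y| ^ p ≤ |x + y| ^ p := by
  have hp1 : 1 < p := by linarith
  have hq : 1 ≤ p - 1 := by linarith
  have hderiv (z : ℝ) : HasDerivAt
      (fun z ↦ |x + z| ^ p - |x| ^ p - p * signedRpow (p - 1) x * z - 2⁻¹ ^ (p - 1) * |z| ^ p)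
      (p * (signedRpow (p - 1) (x + z) - signedRpow (p - 1) x
        - 2⁻¹ ^ (p - 1) * signedRpow (p - 1) z)) z := by
    have hshift : HasDerivAt (fun z ↦ |x + z| ^ p) (p * signedRpow (p - 1) (x + z)) z :=
      (hasDerivAt_abs_rpow_eq_signedRpow (x + z) hp1).comp_const_add x z
    exact (((hshift.sub_const _).sub ((hasDerivAt_id z).const_mul _)).sub
      ((hasDerivAt_abs_rpow_eq_signedRpow z hp1).const_mul _)).congr_deriv (by ring)
  have hmin := le_of_hasDerivAt_nonpos_left_nonneg_right (a := 0) hderiv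
    (fun z hz ↦ mul_nonpos_of_nonneg_of_nonpos (by linarith)
      (by linarith [sub_le_inv_two_rpow_mul_signedRpow hq x hz.le]))
    (fun z hz ↦ mul_nonneg (by linarith)
      (by linarith [inv_two_rpow_mul_signedRpow_le_sub hq x hz.le])) y
  simp only [add_zero, abs_zero, zero_rpow (by linarith : p ≠ 0), mul_zero, sub_self] at hmin
  linarith

theorem stmt6 (α : ℝ) (hα : 2 ≤ α) :
    ∃ C : ℝ, 0 < C ∧ ∀ x y : ℝ,
      |x| ^ α + α * (|x| ^ (α - 2) * x) * y + C * |y| ^ α ≤ |x + y| ^ α := by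
  refine ⟨2⁻¹ ^ (α - 1), by positivity, fun x y ↦ ?_⟩
  simpa only [signedRpow, sub_sub, one_add_one_eq_two] using
    rpow_add_signedRpow_mul_add_le_abs_add_rpow hα x y
end

section
/- Let W ~ N(0,1) be standard normal. For every s > 0 there exists u_0 > 0 (one may take u_0 = max{1, √s}) such that for all u_0 ≤ u_1 ≤ u_2, P(W > u_2)/P(W > u_1) ≤ 2·(u_1/u_2)^s. -/
/-!
For `u > 0` and `φ` the standard normal density, Mills' bounds
`u φ(u) / (u² + 1) ≤ P(W > u) ≤ φ(u) / u` come from integrating over `(u, ∞)` the derivatives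
`x φ(x)` of `-φ` and `(1 + x⁻²) φ(x)` of `-φ(x) / x`. They bound the tail ratio by
`φ(u₂) / φ(u₁)` times `(u₁² + 1) / (u₁ u₂) ≤ 2` (as `u₁ ≥ 1`), and
`φ(u₂) / φ(u₁) = exp (-(u₂² - u₁²) / 2) ≤ (u₁ / u₂) ^ s` because
`s log (u₂ / u₁) ≤ u₁² (u₂ / u₁ - 1) ≤ (u₂² - u₁²) / 2` once `s ≤ u₁²`.
-/

open ProbabilityTheory MeasureTheory Real Set Filter Topology

local notation "φ" => gaussianPDFReal 0 1

lemma setIntegral_Ioi_le_of_hasDerivAt {g g' h : ℝ → ℝ} {a l : ℝ}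
    (hderiv : ∀ x ∈ Ici a, HasDerivAt g (g' x) x) (hg'_nonneg : ∀ x ∈ Ioi a, 0 ≤ g' x)
    (hg : Tendsto g atTop (𝓝 l)) (hh : IntegrableOn h (Ioi a)) (hle : ∀ x ∈ Ioi a, h x ≤ g' x) :
    ∫ x in Ioi a, h x ≤ l - g a := by
  rw [← integral_Ioi_of_hasDerivAt_of_nonneg' hderiv hg'_nonneg hg]
  exact setIntegral_mono_on hh (integrableOn_Ioi_deriv_of_nonneg' hderiv hg'_nonneg hg)
    measurableSet_Ioi hle

lemma le_setIntegral_Ioi_of_hasDerivAt {g g' h : ℝ → ℝ} {a l : ℝ}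
    (hderiv : ∀ x ∈ Ici a, HasDerivAt g (g' x) x) (hg'_nonneg : ∀ x ∈ Ioi a, 0 ≤ g' x)
    (hg : Tendsto g atTop (𝓝 l)) (hh : IntegrableOn h (Ioi a)) (hle : ∀ x ∈ Ioi a, g' x ≤ h x) :
    l - g a ≤ ∫ x in Ioi a, h x := by
  rw [← integral_Ioi_of_hasDerivAt_of_nonneg' hderiv hg'_nonneg hg]
  exact setIntegral_mono_on (integrableOn_Ioi_deriv_of_nonneg' hderiv hg'_nonneg hg) hh
    measurableSet_Ioi hle

lemma gaussianPDFReal_zero_one (x : ℝ) : φ x = (√(2 * π))⁻¹ * exp (-x ^ 2 / 2) := by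
  simp [gaussianPDFReal]

lemma hasDerivAt_gaussianPDFReal_zero_one (x : ℝ) : HasDerivAt φ (-x * φ x) x := by
  have h : HasDerivAt (fun y : ℝ => -y ^ 2 / 2) (-x) x := by
    simpa [neg_div] using ((hasDerivAt_pow 2 x).div_const 2).fun_neg
  rw [funext gaussianPDFReal_zero_one]
  exact (h.exp.const_mul _).congr_deriv (by ring)

lemma tendsto_gaussianPDFReal_zero_one_atTop : Tendsto φ atTop (𝓝 0) := by
  have h : Tendsto (fun x : ℝ => -x ^ 2 / 2) atTop atBot :=
    (tendsto_neg_atTop_atBot.comp (tendsto_pow_atTop two_ne_zero)).atBot_div_const two_pos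
  simpa [funext gaussianPDFReal_zero_one] using
    (tendsto_exp_atBot.comp h).const_mul (√(2 * π))⁻¹

lemma gaussianReal_toReal_apply (μ : ℝ) {v : NNReal} (hv : v ≠ 0) (s : Set ℝ) :
    (gaussianReal μ v s).toReal = ∫ x in s, gaussianPDFReal μ v x := by
  rw [gaussianReal_apply_eq_integral μ hv,
    ENNReal.toReal_ofReal (setIntegral_nonneg_of_ae (ae_of_all _ (gaussianPDFReal_nonneg μ v)))]

lemma gaussianReal_Ioi_toReal_le {u : ℝ} (hu : 0 < u) :
    (gaussianReal 0 1 (Ioi u)).toReal ≤ φ u / u := by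
  have hderiv (x : ℝ) : HasDerivAt (fun y => -(φ y / u)) (x * φ x / u) x :=
    ((hasDerivAt_gaussianPDFReal_zero_one x).div_const u).neg.congr_deriv (by ring)
  have hlim : Tendsto (fun y => -(φ y / u)) atTop (𝓝 0) := by
    simpa using (tendsto_gaussianPDFReal_zero_one_atTop.div_const u).neg
  have h := setIntegral_Ioi_le_of_hasDerivAt (fun x _ => hderiv x)
    (fun x hx => by have := gaussianPDFReal_nonneg 0 1 x; have : 0 < x := hu.trans hx; positivity)
    hlim (integrable_gaussianPDFReal 0 1).integrableOn
    (fun x hx => by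
      rw [le_div_iff₀ hu]
      nlinarith [gaussianPDFReal_nonneg 0 1 x, mem_Ioi.mp hx])
  simpa [gaussianReal_toReal_apply] using h

lemma le_gaussianReal_Ioi_toReal {u : ℝ} (hu : 0 < u) :
    u / (u ^ 2 + 1) * φ u ≤ (gaussianReal 0 1 (Ioi u)).toReal := by
  have hderiv (x : ℝ) (hx : x ∈ Ici u) :
      HasDerivAt (fun y => -(φ y / y)) ((1 + (x ^ 2)⁻¹) * φ x) x := by
    have hx0 : x ≠ 0 := (hu.trans_le hx).ne'
    refine ((hasDerivAt_gaussianPDFReal_zero_one x).div (hasDerivAt_id x) hx0).neg.congr_deriv ?_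
    simp only [id]
    field_simp
    ring
  have hlim : Tendsto (fun y => -(φ y / y)) atTop (𝓝 0) := by
    simpa using (tendsto_gaussianPDFReal_zero_one_atTop.div_atTop tendsto_id).neg
  have h := le_setIntegral_Ioi_of_hasDerivAt hderiv
    (fun x _ => by have := gaussianPDFReal_nonneg 0 1 x; positivity) hlim
    ((integrable_gaussianPDFReal 0 1).integrableOn.const_mul (1 + (u ^ 2)⁻¹))
    (fun x hx => by
      have : u ^ 2 ≤ x ^ 2 := pow_le_pow_left₀ hu.le hx.le 2
      gcongr; exact gaussianPDFReal_nonneg 0 1 x)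
  rw [integral_const_mul, ← gaussianReal_toReal_apply 0 one_ne_zero, zero_sub, neg_neg] at h
  calc u / (u ^ 2 + 1) * φ u = u ^ 2 / (u ^ 2 + 1) * (φ u / u) := by field_simp
    _ ≤ u ^ 2 / (u ^ 2 + 1) * ((1 + (u ^ 2)⁻¹) * (gaussianReal 0 1 (Ioi u)).toReal) := by gcongr
    _ = (gaussianReal 0 1 (Ioi u)).toReal := by field_simp

lemma exp_neg_sq_sub_sq_div_two_le_rpow {s a b : ℝ} (ha : 0 < a) (hab : a ≤ b) (hs : s ≤ a ^ 2) :
    exp (-(b ^ 2 - a ^ 2) / 2) ≤ (a / b) ^ s := by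
  have hb : 0 < b := ha.trans_le hab
  rw [rpow_def_of_pos (div_pos ha hb), exp_le_exp, ← neg_neg (log (a / b)), ← log_inv, inv_div]
  have hlog_nonneg : 0 ≤ log (b / a) := log_nonneg ((one_le_div ha).mpr hab)
  have hlog_le : a * log (b / a) ≤ b - a := by
    have := log_le_sub_one_of_pos (div_pos hb ha)
    rw [div_sub_one ha.ne', le_div_iff₀ ha] at this
    linarith
  nlinarith [mul_le_mul_of_nonneg_right hs hlog_nonneg]

lemma gaussianPDFReal_zero_one_le_rpow_mul {s a b : ℝ} (ha : 0 < a) (hab : a ≤ b)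
    (hs : s ≤ a ^ 2) : φ b ≤ (a / b) ^ s * φ a := by
  have h : φ b = exp (-(b ^ 2 - a ^ 2) / 2) * φ a := by
    rw [gaussianPDFReal_zero_one, gaussianPDFReal_zero_one, mul_left_comm, ← exp_add]
    ring_nf
  rw [h]
  gcongr
  · exact gaussianPDFReal_nonneg 0 1 a
  · exact exp_neg_sq_sub_sq_div_two_le_rpow ha hab hs

theorem stmt9_general (s : ℝ) :
    ∃ u₀ : ℝ, 0 < u₀ ∧ ∀ u₁ u₂ : ℝ, u₀ ≤ u₁ → u₁ ≤ u₂ →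
      ((gaussianReal 0 1) (Set.Ioi u₂)).toReal / ((gaussianReal 0 1) (Set.Ioi u₁)).toReal
        ≤ 2 * (u₁ / u₂) ^ s := by
  refine ⟨max 1 √s, by positivity, fun u₁ u₂ h₀ h₁₂ => ?_⟩
  have hu₁ : 1 ≤ u₁ := le_of_max_le_left h₀
  have hu₁_pos : 0 < u₁ := one_pos.trans_le hu₁
  have hu₂_pos : 0 < u₂ := hu₁_pos.trans_le h₁₂
  have hs : s ≤ u₁ ^ 2 := (sqrt_le_iff.mp (le_of_max_le_right h₀)).2
  have hφ₁ := gaussianPDFReal_pos 0 1 u₁ one_ne_zero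
  have hQ₁ := le_gaussianReal_Ioi_toReal hu₁_pos
  rw [div_le_iff₀ (lt_of_lt_of_le (by positivity) hQ₁)]
  have hfactor : (u₁ ^ 2 + 1) / (u₁ * u₂) ≤ 2 := by
    rw [div_le_iff₀ (by positivity)]
    nlinarith
  calc (gaussianReal 0 1 (Ioi u₂)).toReal ≤ φ u₂ / u₂ := gaussianReal_Ioi_toReal_le hu₂_pos
    _ ≤ (u₁ / u₂) ^ s * φ u₁ / u₂ := by
      gcongr; exact gaussianPDFReal_zero_one_le_rpow_mul hu₁_pos h₁₂ hs
    _ = (u₁ / u₂) ^ s * ((u₁ ^ 2 + 1) / (u₁ * u₂)) * (u₁ / (u₁ ^ 2 + 1) * φ u₁) := by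
      field_simp
    _ ≤ (u₁ / u₂) ^ s * 2 * (gaussianReal 0 1 (Ioi u₁)).toReal := by gcongr
    _ = 2 * (u₁ / u₂) ^ s * (gaussianReal 0 1 (Ioi u₁)).toReal := by ring

theorem stmt9 (s : ℝ) (hs : 0 < s) :
    ∃ u₀ : ℝ, 0 < u₀ ∧ ∀ u₁ u₂ : ℝ, u₀ ≤ u₁ → u₁ ≤ u₂ →
      ((gaussianReal 0 1) (Set.Ioi u₂)).toReal / ((gaussianReal 0 1) (Set.Ioi u₁)).toReal
        ≤ 2 * (u₁ / u₂) ^ s :=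
  stmt9_general s
end

section
/- Let W be a normal random variable. Then inf_{y ∈ ℝ} E[log|W² − y|] > −∞, i.e., the expectation E[log|W² − y|] is bounded below uniformly in y. -/
/-!
Since `Real.log` is `log |·|`, write `a = √|y|`: away from `w = ±a`,
`|w ^ 2 - y| ≥ ||w ^ 2| - |y|| = |w - a| |w + a|`, so the negative part of `log |w ^ 2 - y|` is at
most the sum of the negative parts of `log |w - a|` and `log |w + a|`. Each of these has Lebesgue
integral `∫⁻ (log |t|)⁻ dt < ∞`, independent of `a` by translation invariance, and the Gaussian
law has density bounded by `(√(2πv))⁻¹`. Minus the integral of the negative part bounds the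
Bochner integral from below, also in the non-integrable case, where the integral is `0`.
-/

open ProbabilityTheory MeasureTheory Real
open scoped ENNReal NNReal

lemma ofReal_neg_log_mul_le {x y : ℝ} (hx : x ≠ 0) (hy : y ≠ 0) :
    ENNReal.ofReal (-log (x * y)) ≤ ENNReal.ofReal (-log x) + ENNReal.ofReal (-log y) := by
  rw [log_mul hx hy, neg_add]
  exact ENNReal.ofReal_add_le

lemma ofReal_neg_log_le_of_abs_le {x y : ℝ} (hx : x ≠ 0) (h : |x| ≤ |y|) :
    ENNReal.ofReal (-log y) ≤ ENNReal.ofReal (-log x) := by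
  rw [← log_abs x, ← log_abs y]
  exact ENNReal.ofReal_le_ofReal (neg_le_neg (log_le_log (abs_pos.2 hx) h))

lemma ofReal_neg_log_sq_sub_le (y : ℝ) {w : ℝ} (hw : w ^ 2 ≠ |y|) :
    ENNReal.ofReal (-log (w ^ 2 - y)) ≤
      ENNReal.ofReal (-log (w - √|y|)) + ENNReal.ofReal (-log (w + √|y|)) := by
  have hfactor : (w - √|y|) * (w + √|y|) = |w ^ 2| - |y| := by
    rw [abs_of_nonneg (sq_nonneg w)]
    linear_combination (-1 : ℝ) * sq_sqrt (abs_nonneg y)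
  have hne : (w - √|y|) * (w + √|y|) ≠ 0 := by
    rw [hfactor, abs_of_nonneg (sq_nonneg w)]
    exact sub_ne_zero.2 hw
  calc ENNReal.ofReal (-log (w ^ 2 - y))
      ≤ ENNReal.ofReal (-log ((w - √|y|) * (w + √|y|))) := by
        refine ofReal_neg_log_le_of_abs_le hne ?_
        rw [hfactor]
        exact abs_abs_sub_abs_le_abs_sub _ _
    _ ≤ _ := ofReal_neg_log_mul_le (left_ne_zero_of_mul hne) (right_ne_zero_of_mul hne)

lemma lintegral_ofReal_neg_log_lt_top : ∫⁻ t : ℝ, ENNReal.ofReal (-log t) < ∞ := by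
  have hsupp : ∀ t ∉ Set.Icc (-1 : ℝ) 1, ENNReal.ofReal (-log t) = 0 := by
    intro t ht
    rw [ENNReal.ofReal_eq_zero, neg_nonpos, ← log_abs]
    rw [Set.mem_Icc, not_and_or, not_le, not_le] at ht
    exact log_nonneg (le_abs'.2 (ht.imp le_of_lt le_of_lt))
  have hint : IntegrableOn log (Set.Icc (-1 : ℝ) 1) := by
    rw [integrableOn_Icc_iff_integrableOn_Ioc, ← intervalIntegrable_iff_integrableOn_Ioc_of_le
      (by norm_num)]
    exact intervalIntegral.intervalIntegrable_log'
  calc ∫⁻ t : ℝ, ENNReal.ofReal (-log t)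
      = ∫⁻ t in Set.Icc (-1 : ℝ) 1, ENNReal.ofReal (-log t) :=
        (setLIntegral_eq_of_support_subset (Function.support_subset_iff'.2 hsupp)).symm
    _ ≤ ∫⁻ t in Set.Icc (-1 : ℝ) 1, ‖log t‖ₑ := by
        refine lintegral_mono fun t => ?_
        rw [← ofReal_norm]
        exact ENNReal.ofReal_le_ofReal (neg_le_abs _)
    _ < ∞ := hint.hasFiniteIntegral

lemma lintegral_ofReal_neg_log_sq_sub_le (y : ℝ) :
    ∫⁻ w : ℝ, ENNReal.ofReal (-log (w ^ 2 - y)) ≤ 2 * ∫⁻ t : ℝ, ENNReal.ofReal (-log t) := by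
  have hmeas : Measurable fun t : ℝ => ENNReal.ofReal (-log t) :=
    ENNReal.measurable_ofReal.comp measurable_log.neg
  have hnull : ∀ᵐ w : ℝ, w ^ 2 ≠ |y| := by
    refine measure_mono_null (t := {√|y|, -√|y|}) (fun w hw => ?_)
      ((Set.toFinite _).measure_zero _)
    have hsq : w ^ 2 = √|y| ^ 2 := by simpa [sq_sqrt (abs_nonneg y)] using hw
    simpa using sq_eq_sq_iff_eq_or_eq_neg.1 hsq
  calc ∫⁻ w : ℝ, ENNReal.ofReal (-log (w ^ 2 - y))
      ≤ ∫⁻ w : ℝ, ENNReal.ofReal (-log (w - √|y|)) + ENNReal.ofReal (-log (w + √|y|)) :=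
        lintegral_mono_ae (hnull.mono fun w hw => ofReal_neg_log_sq_sub_le y hw)
    _ = 2 * ∫⁻ t : ℝ, ENNReal.ofReal (-log t) := by
        rw [lintegral_add_left (f := fun w => ENNReal.ofReal (-log (w - √|y|)))
            (hmeas.comp (measurable_id.sub_const _)),
          lintegral_sub_right_eq_self (fun t => ENNReal.ofReal (-log t)),
          lintegral_add_right_eq_self (fun t => ENNReal.ofReal (-log t)), two_mul]

lemma gaussianPDFReal_le (μ : ℝ) (v : ℝ≥0) (x : ℝ) : gaussianPDFReal μ v x ≤ (√(2 * π * v))⁻¹ := by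
  rw [gaussianPDFReal_def]
  refine mul_le_of_le_one_right (by positivity) (exp_le_one_iff.2 ?_)
  exact div_nonpos_of_nonpos_of_nonneg (neg_nonpos.2 (sq_nonneg _)) (by positivity)

lemma gaussianReal_le_smul_volume (μ : ℝ) {v : ℝ≥0} (hv : v ≠ 0) :
    gaussianReal μ v ≤ ENNReal.ofReal (√(2 * π * v))⁻¹ • volume := by
  rw [gaussianReal_of_var_ne_zero μ hv, ← withDensity_const]
  exact withDensity_mono (.of_forall fun x => ENNReal.ofReal_le_ofReal (gaussianPDFReal_le μ v x))

lemma neg_toReal_lintegral_ofReal_neg_le_integral {α : Type*} [MeasurableSpace α] (μ : Measure α)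
    (f : α → ℝ) : -(∫⁻ x, ENNReal.ofReal (-f x) ∂μ).toReal ≤ ∫ x, f x ∂μ := by
  by_cases hf : Integrable f μ
  · rw [integral_eq_lintegral_pos_part_sub_lintegral_neg_part hf]
    linarith [ENNReal.toReal_nonneg (a := ∫⁻ x, ENNReal.ofReal (f x) ∂μ)]
  · rw [integral_undef hf, neg_nonpos]
    exact ENNReal.toReal_nonneg

theorem stmt10 (m : ℝ) (v : NNReal) (hv : v ≠ 0) :
    ∃ c : ℝ, ∀ y : ℝ,
      c ≤ ∫ w, Real.log |w ^ 2 - y| ∂(gaussianReal m v) := by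
  set B := ENNReal.ofReal (√(2 * π * v))⁻¹ * (2 * ∫⁻ t : ℝ, ENNReal.ofReal (-log t))
  have hB : B ≠ ∞ := ENNReal.mul_ne_top ENNReal.ofReal_ne_top
    (ENNReal.mul_ne_top ENNReal.ofNat_ne_top lintegral_ofReal_neg_log_lt_top.ne)
  refine ⟨-B.toReal, fun y => ?_⟩
  have hbound : ∫⁻ w, ENNReal.ofReal (-log |w ^ 2 - y|) ∂gaussianReal m v ≤ B := by
    simp only [log_abs]
    calc ∫⁻ w, ENNReal.ofReal (-log (w ^ 2 - y)) ∂gaussianReal m v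
        ≤ ∫⁻ w, ENNReal.ofReal (-log (w ^ 2 - y)) ∂(ENNReal.ofReal (√(2 * π * v))⁻¹ • volume) :=
          lintegral_mono' (gaussianReal_le_smul_volume m hv) le_rfl
      _ ≤ B := by
          rw [lintegral_smul_measure]
          exact mul_le_mul' le_rfl (lintegral_ofReal_neg_log_sq_sub_le y)
  calc -B.toReal ≤ -(∫⁻ w, ENNReal.ofReal (-log |w ^ 2 - y|) ∂gaussianReal m v).toReal :=
        neg_le_neg (ENNReal.toReal_mono hB hbound)
    _ ≤ _ := neg_toReal_lintegral_ofReal_neg_le_integral _ _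
end

section
/- Consider the univariate recursion X_{n+1} = A_{n+1} X_n + B_{n+1} where (A_n, B_n) are i.i.d., A_n > 0 and B_n ≥ 0 almost surely, P(B = 0) < 1, E|log A| < ∞, E|log B| < ∞, and E[log A] > 0. Then for any starting point x_0 ≥ 0, almost surely lim_{n→∞} (1/n) log X_n = E[log A]. -/
/-!
Unrolling the recursion, `X n = P n * (x₀ + ∑_{k<n} B k / P (k+1))` with `P n = ∏_{i<n} A i`.
By the strong law of large numbers `(log P n) / n → γ = E[log A] > 0`, and, applied to `log⁺ B`,
`log⁺ (B n) / n → 0`. Hence the terms of the series decay geometrically, the bracket converges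
to a finite limit, which is positive because almost surely some `B k` is positive, and so
`log X n / n = log P n / n + o(1) → γ`.
-/

open MeasureTheory ProbabilityTheory Filter Finset Topology Real

section Deterministic

lemma le_exp_posLog (x : ℝ) : x ≤ exp (log⁺ x) := by
  rcases le_or_gt x 0 with hx | hx
  · exact hx.trans (exp_pos _).le
  · calc x = exp (log x) := (exp_log hx).symm
      _ ≤ exp (log⁺ x) := exp_le_exp.2 (le_max_right _ _)

lemma posLog_le_abs_log (x : ℝ) : log⁺ x ≤ |log x| :=
  max_le (abs_nonneg _) (le_abs_self _)

lemma tendsto_succ_div_natCast {u : ℕ → ℝ} {δ : ℝ}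
    (h : Tendsto (fun n : ℕ => u n / n) atTop (𝓝 δ)) :
    Tendsto (fun n : ℕ => u (n + 1) / n) atTop (𝓝 δ) := by
  have h' := ((tendsto_add_atTop_iff_nat 1).2 h).div
    (tendsto_natCast_div_add_atTop (1 : ℝ)) one_ne_zero
  rw [div_one] at h'
  refine h'.congr' ?_
  filter_upwards [eventually_ne_atTop 0] with n hn
  have : (n : ℝ) ≠ 0 := Nat.cast_ne_zero.2 hn
  simp only [Pi.div_apply, Nat.cast_add_one]
  field_simp

lemma tendsto_div_natCast_zero_of_tendsto_sum_div {f : ℕ → ℝ} {δ : ℝ}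
    (h : Tendsto (fun n : ℕ => (∑ i ∈ range n, f i) / n) atTop (𝓝 δ)) :
    Tendsto (fun n : ℕ => f n / n) atTop (𝓝 0) := by
  have h' := (tendsto_succ_div_natCast h).sub h
  rw [sub_self] at h'
  refine h'.congr fun n => ?_
  rw [sum_range_succ]
  ring

lemma summable_of_le_exp_of_tendsto_div {f u : ℕ → ℝ} {γ : ℝ} (hγ : γ < 0)
    (hf : ∀ k, 0 ≤ f k) (hfu : ∀ k, f k ≤ exp (u k))
    (hu : Tendsto (fun k : ℕ => u k / k) atTop (𝓝 γ)) : Summable f := by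
  refine Summable.of_norm_bounded_eventually_nat
    (summable_geometric_of_lt_one (exp_pos (γ / 2)).le (exp_lt_one_iff.2 (by linarith))) ?_
  filter_upwards [hu.eventually_lt_const (by linarith : γ < γ / 2), eventually_gt_atTop 0]
    with k hk hk0
  have hk0' : (0 : ℝ) < k := Nat.cast_pos.2 hk0
  rw [norm_of_nonneg (hf k), ← exp_nat_mul]
  exact (hfu k).trans (exp_le_exp.2 (by rw [div_lt_iff₀ hk0'] at hk; linarith))

lemma affine_recursion_eq_prod_mul {a b X : ℕ → ℝ} (ha : ∀ n, a n ≠ 0)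
    (hX : ∀ n, X (n + 1) = a n * X n + b n) (n : ℕ) :
    X n = (∏ i ∈ range n, a i) * (X 0 + ∑ k ∈ range n, b k / ∏ i ∈ range (k + 1), a i) := by
  induction n with
  | zero => simp
  | succ n ih =>
    have hP : ∏ i ∈ range n, a i ≠ 0 := prod_ne_zero_iff.2 fun i _ => ha i
    have han := ha n
    rw [hX, ih, sum_range_succ, prod_range_succ]
    field_simp
    ring

theorem tendsto_log_affine_recursion_div {a b X : ℕ → ℝ} {γ : ℝ} (ha : ∀ n, 0 < a n)
    (hb : ∀ n, 0 ≤ b n) (hX0 : 0 ≤ X 0) (hX : ∀ n, X (n + 1) = a n * X n + b n)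
    (hγ : 0 < γ) (hbk : ∃ k, 0 < b k)
    (hs : Tendsto (fun n : ℕ => (∑ i ∈ range n, log (a i)) / n) atTop (𝓝 γ))
    (hb_growth : Tendsto (fun n : ℕ => log⁺ (b n) / n) atTop (𝓝 0)) :
    Tendsto (fun n : ℕ => log (X n) / n) atTop (𝓝 γ) := by
  set P : ℕ → ℝ := fun n => ∏ i ∈ range n, a i
  set t : ℕ → ℝ := fun k => b k / P (k + 1)
  set Y : ℕ → ℝ := fun n => X 0 + ∑ k ∈ range n, t k
  have hP : ∀ n, 0 < P n := fun n => prod_pos fun i _ => ha i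
  have hlogP : ∀ n, log (P n) = ∑ i ∈ range n, log (a i) := fun n =>
    log_prod fun i _ => (ha i).ne'
  have ht : ∀ k, 0 ≤ t k := fun k => div_nonneg (hb k) (hP _).le
  have ht_le : ∀ k, t k ≤ exp (log⁺ (b k) - log (P (k + 1))) := fun k => by
    rw [exp_sub, exp_log (hP _)]
    exact div_le_div_of_nonneg_right (le_exp_posLog _) (hP _).le
  have hdecay : Tendsto (fun k : ℕ => (log⁺ (b k) - log (P (k + 1))) / k) atTop (𝓝 (0 - γ)) :=
    (hb_growth.sub (tendsto_succ_div_natCast hs)).congr fun k => by rw [hlogP, sub_div]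
  have hsum : Summable t :=
    summable_of_le_exp_of_tendsto_div (by linarith) ht ht_le hdecay
  have hC : 0 < X 0 + ∑' k, t k := by
    obtain ⟨k, hk⟩ := hbk
    exact add_pos_of_nonneg_of_pos hX0 (hsum.tsum_pos ht k (div_pos hk (hP _)))
  have hY : Tendsto Y atTop (𝓝 (X 0 + ∑' k, t k)) :=
    tendsto_const_nhds.add hsum.hasSum.tendsto_sum_nat
  have hlogY : Tendsto (fun n : ℕ => log (Y n) / n) atTop (𝓝 0) :=
    ((continuousAt_log hC.ne').tendsto.comp hY).div_atTop tendsto_natCast_atTop_atTop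
  rw [← add_zero γ]
  refine (hs.add hlogY).congr' ?_
  filter_upwards [hY.eventually (lt_mem_nhds hC)] with n hYn
  rw [affine_recursion_eq_prod_mul (fun n => (ha n).ne') hX n, log_mul (hP n).ne' hYn.ne',
    hlogP, add_div]

end Deterministic

section IID

variable {Ω β : Type*} [MeasurableSpace Ω] {μ : Measure Ω} [MeasurableSpace β] {Z : ℕ → Ω → β}

lemma ae_exists_notMem_of_iIndepFun (hindep : iIndepFun Z μ)
    (hident : ∀ n, IdentDistrib (Z n) (Z 0) μ μ) {S : Set β} (hS : MeasurableSet S)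
    (hlt : μ (Z 0 ⁻¹' S) < 1) : ∀ᵐ ω ∂μ, ∃ k, Z k ω ∉ S := by
  rw [ae_iff]
  have hle : ∀ n, μ {ω | ¬∃ k, Z k ω ∉ S} ≤ μ (Z 0 ⁻¹' S) ^ n := fun n =>
    calc μ {ω | ¬∃ k, Z k ω ∉ S} ≤ μ (⋂ k ∈ range n, Z k ⁻¹' S) :=
          measure_mono fun ω hω => Set.mem_iInter₂.2 fun k _ => by_contra fun h => hω ⟨k, h⟩
      _ = ∏ k ∈ range n, μ (Z k ⁻¹' S) := hindep.measure_inter_preimage_eq_mul _ fun _ _ => hS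
      _ = μ (Z 0 ⁻¹' S) ^ n := by
          rw [prod_congr rfl fun k _ => (hident k).measure_mem_eq hS, prod_const, card_range]
  exact nonpos_iff_eq_zero.1 (ge_of_tendsto' (ENNReal.tendsto_pow_atTop_nhds_zero_of_lt_one hlt) hle)

lemma strong_law_ae_comp (hindep : iIndepFun Z μ) (hident : ∀ n, IdentDistrib (Z n) (Z 0) μ μ)
    {g : β → ℝ} (hg : Measurable g) (hint : Integrable (fun ω => g (Z 0 ω)) μ) :
    ∀ᵐ ω ∂μ, Tendsto (fun n : ℕ => (∑ i ∈ range n, g (Z i ω)) / n) atTop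
      (𝓝 (∫ ω, g (Z 0 ω) ∂μ)) :=
  strong_law_ae_real (fun i ω => g (Z i ω)) hint
    (fun _ _ hij => (hindep.indepFun hij).comp hg hg) fun i => (hident i).comp hg

end IID

theorem stmt14_general {Ω : Type*} [MeasureSpace Ω]
    (A B : ℕ → Ω → ℝ)
    (hindep : iIndepFun (fun n ω => (A n ω, B n ω)) ℙ)
    (hident : ∀ n, IdentDistrib (fun ω => (A n ω, B n ω)) (fun ω => (A 0 ω, B 0 ω)) ℙ ℙ)
    (hpos : ∀ᵐ ω ∂(ℙ : Measure Ω), ∀ n, 0 < A n ω ∧ 0 ≤ B n ω)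
    (hB0 : (ℙ : Measure Ω) {ω | B 0 ω = 0} < 1)
    (hlogA : Integrable (fun ω => |Real.log (A 0 ω)|) ℙ)
    (hlogB : Integrable (fun ω => |Real.log (B 0 ω)|) ℙ)
    (hγpos : 0 < ∫ ω, Real.log (A 0 ω) ∂(ℙ : Measure Ω))
    (x₀ : ℝ) (hx₀ : 0 ≤ x₀)
    (X : ℕ → Ω → ℝ)
    (hX0 : ∀ ω, X 0 ω = x₀)
    (hXs : ∀ n ω, X (n + 1) ω = A n ω * X n ω + B n ω) :
    ∀ᵐ ω ∂(ℙ : Measure Ω),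
      Tendsto (fun n : ℕ => Real.log (X n ω) / n) atTop
        (nhds (∫ ω, Real.log (A 0 ω) ∂(ℙ : Measure Ω))) := by
  have hZ0 := (hident 0).aemeasurable_fst
  have hlogA' : Integrable (fun ω => log (A 0 ω)) ℙ :=
    hlogA.mono' ((measurable_log.comp measurable_fst).comp_aemeasurable hZ0).aestronglyMeasurable
      (ae_of_all _ fun ω => le_of_eq (norm_eq_abs _))
  have hlogB' : Integrable (fun ω => log⁺ (B 0 ω)) ℙ :=
    hlogB.mono' ((continuous_posLog.measurable.comp measurable_snd).comp_aemeasurable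
      hZ0).aestronglyMeasurable
      (ae_of_all _ fun ω => by rw [norm_of_nonneg posLog_nonneg]; exact posLog_le_abs_log _)
  filter_upwards [hpos,
    strong_law_ae_comp hindep hident (g := fun p => log p.1)
      (measurable_log.comp measurable_fst) hlogA',
    strong_law_ae_comp hindep hident (g := fun p => log⁺ p.2)
      (continuous_posLog.measurable.comp measurable_snd) hlogB',
    ae_exists_notMem_of_iIndepFun hindep hident
      ((measurableSet_singleton 0).preimage measurable_snd) hB0]
    with ω hω hsA hsB ⟨k, hk⟩
  exact tendsto_log_affine_recursion_div (fun n => (hω n).1) (fun n => (hω n).2)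
    ((hX0 ω).symm ▸ hx₀) (fun n => hXs n ω) hγpos ⟨k, lt_of_le_of_ne (hω k).2 (Ne.symm hk)⟩
    hsA (tendsto_div_natCast_zero_of_tendsto_sum_div hsB)

theorem stmt14 {Ω : Type*} [MeasureSpace Ω] [IsProbabilityMeasure (ℙ : Measure Ω)]
    (A B : ℕ → Ω → ℝ)
    (hmeas : ∀ n, Measurable (fun ω => (A n ω, B n ω)))
    (hindep : iIndepFun (fun n ω => (A n ω, B n ω)) ℙ)
    (hident : ∀ n, IdentDistrib (fun ω => (A n ω, B n ω)) (fun ω => (A 0 ω, B 0 ω)) ℙ ℙ)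
    (hpos : ∀ᵐ ω ∂(ℙ : Measure Ω), ∀ n, 0 < A n ω ∧ 0 ≤ B n ω)
    (hB0 : (ℙ : Measure Ω) {ω | B 0 ω = 0} < 1)
    (hlogA : Integrable (fun ω => |Real.log (A 0 ω)|) ℙ)
    (hlogB : Integrable (fun ω => |Real.log (B 0 ω)|) ℙ)
    (hγpos : 0 < ∫ ω, Real.log (A 0 ω) ∂(ℙ : Measure Ω))
    (x₀ : ℝ) (hx₀ : 0 ≤ x₀)
    (X : ℕ → Ω → ℝ)
    (hX0 : ∀ ω, X 0 ω = x₀)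
    (hXs : ∀ n ω, X (n + 1) ω = A n ω * X n ω + B n ω) :
    ∀ᵐ ω ∂(ℙ : Measure Ω),
      Tendsto (fun n : ℕ => Real.log (X n ω) / n) atTop
        (nhds (∫ ω, Real.log (A 0 ω) ∂(ℙ : Measure Ω))) :=
  stmt14_general A B hindep hident hpos hB0 hlogA hlogB hγpos x₀ hx₀ X hX0 hXs
end

section
/- Let r > 0, let U be a d×d random matrix and V a d-dimensional random vector with E[‖U‖^r] ≤ 1, E[‖U‖^s] < 1 for all s ∈ (0,r), and 0 < E[|V|^r] < ∞ (and E[‖U‖^{r−k}|V|^k] < ∞ for all integers 0 ≤ k ≤ ⌊r⌋). Then there exist constants c_1, …, c_{⌊r⌋} > 0 such that the function g(x) = |x|^r + c_1|x|^{r−1} + ⋯ + c_{⌊r⌋}|x|^{r−⌊r⌋} (g(x) = |x|^r if r ≤ 1) satisfies E[g(Ux + V)] − g(x) ≤ E[g(V)] for all x ∈ ℝ^d. -/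
open MeasureTheory ProbabilityTheory Finset

/-- Operator norm (w.r.t. the Euclidean norm) of a real square matrix. -/
noncomputable def opN {d : ℕ} (M : Matrix (Fin d) (Fin d) ℝ) : ℝ :=
  ‖Matrix.toEuclideanCLM (𝕜 := ℝ) M‖

/-- The Lyapunov-type function g(x) = |x|^r + ∑_{k=1}^{⌊r⌋} c_k |x|^{r-k}. -/
noncomputable def lyapG {d : ℕ} (r : ℝ) (c : ℕ → ℝ) (y : EuclideanSpace ℝ (Fin d)) : ℝ :=
  ‖y‖ ^ r + ∑ k ∈ Finset.Icc 1 ⌊r⌋₊, c k * ‖y‖ ^ (r - k)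

/-!
The function is taken with weights `c_k = T ^ k`. Put `s_j = r - j` and `M = ⌈r⌉ - 1`, so that
`s_j > 1` exactly for `j < M` and `τ = s_M ∈ (0, 1]`. Since `|Ux + V| ≤ ‖U‖ |x| + |V|`, each power
`(a + b) ^ s_j` is at most `a ^ s_j + b ^ s_j`, plus, when `s_j > 1`, cross terms
`a ^ (s_j - 1) b + a ^ τ b ^ (s_j - τ)`, and `s_j - τ = M - j` is an integer. In expectation the
`b`-terms add up to `E g(V)`, the level `j` term `E‖U‖ ^ s_j |x| ^ s_j` leaves a gap
`T ^ j (1 - E‖U‖ ^ s_j) |x| ^ s_j` which is positive for `1 ≤ j ≤ M`, and the cross terms of level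
`j` carry `|x| ^ s_(j+1)` or `|x| ^ s_M` with the weight `T ^ j` only, so they are absorbed by the
gaps at levels `j + 1` and `M` once `T` is large.
-/

lemma rpow_le_one_add_rpow {a p q : ℝ} (ha : 0 ≤ a) (hp : 0 ≤ p) (hpq : p ≤ q) :
    a ^ p ≤ 1 + a ^ q := by
  rcases le_total a 1 with h | h
  · linarith [Real.rpow_le_one ha h hp, Real.rpow_nonneg ha q]
  · linarith [Real.rpow_le_rpow_of_exponent_le h hpq]

lemma add_rpow_le_rpow_add_mul {a b p : ℝ} (ha : 0 ≤ a) (hb : 0 ≤ b) (hp : 1 ≤ p) :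
    (a + b) ^ p ≤ a ^ p + p * (a + b) ^ (p - 1) * b := by
  rcases (add_nonneg ha hb).eq_or_lt with h | h
  · obtain ⟨rfl, rfl⟩ : a = 0 ∧ b = 0 := ⟨by linarith, by linarith⟩
    simp
  have hs : -1 ≤ -b / (a + b) := by
    rw [neg_div, neg_le_neg_iff, div_le_one h]; linarith
  have hbern := one_add_mul_self_le_rpow_one_add hs hp
  rw [show 1 + -b / (a + b) = a / (a + b) by field_simp; ring, Real.div_rpow ha h.le,
    le_div_iff₀ (Real.rpow_pos_of_pos h p)] at hbern
  have hexp : (1 + p * (-b / (a + b))) * (a + b) ^ p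
      = (a + b) ^ p - p * (a + b) ^ (p - 1) * b := by
    rw [Real.rpow_sub_one h.ne']; field_simp; ring
  linarith

lemma add_rpow_le_add_mul_rpow_of_le {a b p : ℝ} (hb : 0 ≤ b) (hba : b ≤ a) (hp : 1 ≤ p) :
    (a + b) ^ p ≤ a ^ p + p * 2 ^ (p - 1) * (a ^ (p - 1) * b) := by
  have ha : 0 ≤ a := hb.trans hba
  calc (a + b) ^ p ≤ a ^ p + p * (a + b) ^ (p - 1) * b := add_rpow_le_rpow_add_mul ha hb hp
    _ ≤ a ^ p + p * (2 * a) ^ (p - 1) * b := by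
      gcongr
      linarith
    _ = a ^ p + p * 2 ^ (p - 1) * (a ^ (p - 1) * b) := by
      rw [Real.mul_rpow zero_le_two ha]; ring

lemma mul_rpow_le_rpow_mul_rpow {a b p τ : ℝ} (ha : 0 ≤ a) (hab : a ≤ b) (hτ : τ ≤ 1) :
    a * b ^ (p - 1) ≤ a ^ τ * b ^ (p - τ) := by
  rcases ha.eq_or_lt with rfl | ha
  · rw [zero_mul]; positivity
  have hb : 0 < b := ha.trans_le hab
  calc a * b ^ (p - 1) = a ^ τ * (a ^ (1 - τ) * b ^ (p - 1)) := by
        rw [← mul_assoc, ← Real.rpow_add ha]; simp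
    _ ≤ a ^ τ * (b ^ (1 - τ) * b ^ (p - 1)) := by
        gcongr
    _ = a ^ τ * b ^ (p - τ) := by
        rw [← Real.rpow_add hb]; ring_nf

lemma add_rpow_le_add_rpow_add_cross {a b p τ : ℝ} (ha : 0 ≤ a) (hb : 0 ≤ b) (hp : 1 ≤ p)
    (hτ : τ ≤ 1) :
    (a + b) ^ p ≤ a ^ p + b ^ p + p * 2 ^ (p - 1) * (a ^ (p - 1) * b + a ^ τ * b ^ (p - τ)) := by
  have hK : 0 ≤ p * 2 ^ (p - 1) := by positivity
  rcases le_total b a with hba | hab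
  · have := add_rpow_le_add_mul_rpow_of_le hb hba hp
    have : 0 ≤ p * 2 ^ (p - 1) * (a ^ τ * b ^ (p - τ)) := by positivity
    have : 0 ≤ b ^ p := by positivity
    linarith
  · have h := add_rpow_le_add_mul_rpow_of_le ha hab hp
    rw [add_comm b a] at h
    have := mul_le_mul_of_nonneg_left (mul_rpow_le_rpow_mul_rpow (p := p) ha hab hτ) hK
    have : 0 ≤ p * 2 ^ (p - 1) * (a ^ (p - 1) * b) := by positivity
    have : 0 ≤ a ^ p := by positivity
    linarith

noncomputable def rpowSum (r T : ℝ) (N : ℕ) (t : ℝ) : ℝ :=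
  ∑ j ∈ range (N + 1), T ^ j * t ^ (r - j)

-- The cross terms of `add_rpow_le_add_rpow_add_cross` at the exponents `r - j > 1`, i.e. `j < M`
-- when `M < r ≤ M + 1`; then `r - M` plays the role of `τ`.
noncomputable def crossSum (r T : ℝ) (M : ℕ) (a b : ℝ) : ℝ :=
  ∑ j ∈ range M, T ^ j * ((r - j) * 2 ^ (r - (j + 1)) *
    (a ^ (r - (j + 1)) * b + a ^ (r - M) * b ^ (M - j)))

lemma lyapG_pow_eq_rpowSum {d : ℕ} (r T : ℝ) (y : EuclideanSpace ℝ (Fin d)) :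
    lyapG r (T ^ ·) y = rpowSum r T ⌊r⌋₊ ‖y‖ := by
  rw [lyapG, rpowSum, range_eq_Ico, sum_eq_sum_Ico_succ_bot ⌊r⌋₊.add_one_pos, zero_add,
    Finset.Ico_add_one_right_eq_Icc]
  simp

section rpowSum

variable {r T : ℝ} {N M : ℕ}

lemma rpowSum_nonneg (hT : 0 ≤ T) {t : ℝ} (ht : 0 ≤ t) : 0 ≤ rpowSum r T N t :=
  sum_nonneg fun _ _ => by positivity

lemma rpowSum_mono (hT : 0 ≤ T) (hN : (N : ℝ) ≤ r) {s t : ℝ} (hs : 0 ≤ s) (hst : s ≤ t) :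
    rpowSum r T N s ≤ rpowSum r T N t := by
  refine sum_le_sum fun j hj => ?_
  have : (j : ℝ) ≤ N := by exact_mod_cast Nat.lt_succ_iff.mp (mem_range.mp hj)
  gcongr
  linarith

lemma rpowSum_add_le (hT : 0 ≤ T) (hN : (N : ℝ) ≤ r) (hMN : M ≤ N) (hM : (M : ℝ) < r)
    (hrM : r ≤ M + 1) {a b : ℝ} (ha : 0 ≤ a) (hb : 0 ≤ b) :
    rpowSum r T N (a + b) ≤ rpowSum r T N a + rpowSum r T N b + crossSum r T M a b := by
  have hlow : ∀ j ∈ range M, T ^ j * (a + b) ^ (r - j) ≤ T ^ j * a ^ (r - j) +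
      T ^ j * b ^ (r - j) + T ^ j * ((r - j) * 2 ^ (r - (j + 1)) *
        (a ^ (r - (j + 1)) * b + a ^ (r - M) * b ^ (M - j))) := by
    intro j hj
    have hjM : j < M := mem_range.mp hj
    have hjM' : (j : ℝ) + 1 ≤ M := by exact_mod_cast hjM
    have key := add_rpow_le_add_rpow_add_cross ha hb (p := r - j) (τ := r - M) (by linarith)
      (by linarith)
    rw [sub_sub, show r - j - (r - M) = ((M - j : ℕ) : ℝ) by
      push_cast [Nat.cast_sub hjM.le]; ring, Real.rpow_natCast] at key
    have := mul_le_mul_of_nonneg_left key (pow_nonneg hT j)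
    linarith
  have hhigh : ∀ j ∈ Ico M (N + 1),
      T ^ j * (a + b) ^ (r - j) ≤ T ^ j * a ^ (r - j) + T ^ j * b ^ (r - j) := by
    intro j hj
    obtain ⟨hMj, hjN⟩ := mem_Ico.mp hj
    have hMj' : (M : ℝ) ≤ j := by exact_mod_cast hMj
    have hjN' : (j : ℝ) ≤ N := by exact_mod_cast Nat.lt_succ_iff.mp hjN
    rw [← mul_add]
    exact mul_le_mul_of_nonneg_left
      (Real.rpow_add_le_add_rpow ha hb (by linarith) (by linarith)) (pow_nonneg hT j)
  have h1 := sum_le_sum hlow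
  have h2 := sum_le_sum hhigh
  simp only [sum_add_distrib] at h1 h2
  simp only [rpowSum, crossSum, ← sum_range_add_sum_Ico _ (Nat.le_succ_of_le hMN)]
  linarith

lemma rpowSum_mul {a x : ℝ} (ha : 0 ≤ a) (hx : 0 ≤ x) :
    rpowSum r T N (a * x) = ∑ j ∈ range (N + 1), T ^ j * x ^ (r - j) * a ^ (r - j) :=
  sum_congr rfl fun j _ => by rw [Real.mul_rpow ha hx]; ring


lemma crossSum_mul {a b x : ℝ} (ha : 0 ≤ a) (hx : 0 ≤ x) :
    crossSum r T M (a * x) b = ∑ j ∈ range M,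
      (T ^ j * (r - j) * 2 ^ (r - (j + 1)) * x ^ (r - (j + 1)) * (a ^ (r - (j + 1)) * b) +
        T ^ j * (r - j) * 2 ^ (r - (j + 1)) * x ^ (r - M) * (a ^ (r - M) * b ^ (M - j))) :=
  sum_congr rfl fun j _ => by simp only [Real.mul_rpow ha hx]; ring


lemma sum_rpow_add_sum_cross_le (hT : 1 ≤ T) (hMN : M ≤ N) {X : ℝ} (hX : 0 ≤ X)
    (ρ P Q : ℕ → ℝ) (hρ : ∀ j ≤ N, ρ j ≤ 1) (hQ : ∀ j ∈ range M, 0 ≤ Q j)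
    (hTPQ : ∀ j ∈ range M,
      2 * P j ≤ T * (1 - ρ (j + 1)) ∧ 2 * ∑ i ∈ range M, Q i ≤ T * (1 - ρ M)) :
    ∑ j ∈ range (N + 1), T ^ j * ρ j * X ^ (r - j) +
        ∑ j ∈ range M, T ^ j * (P j * X ^ (r - (j + 1)) + Q j * X ^ (r - M)) ≤
      rpowSum r T N X := by
  set G : ℕ → ℝ := fun m => T ^ m * (1 - ρ m) * X ^ (r - m) with hGdef
  have hG : ∀ m ≤ N, 0 ≤ G m := fun m hm =>
    mul_nonneg (mul_nonneg (by positivity) (sub_nonneg.2 (hρ m hm))) (by positivity)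
  have hsplit : rpowSum r T N X = ∑ j ∈ range (N + 1), T ^ j * ρ j * X ^ (r - j) +
      ∑ j ∈ range (N + 1), G j := by
    rw [rpowSum, ← sum_add_distrib]
    exact sum_congr rfl fun j _ => by ring
  suffices ∑ j ∈ range M, T ^ j * (P j * X ^ (r - (j + 1)) + Q j * X ^ (r - M)) ≤
      ∑ j ∈ range (N + 1), G j by linarith
  rcases M.eq_zero_or_pos with rfl | hM
  · simpa using sum_nonneg fun m hm => hG m (Nat.lt_succ_iff.mp (mem_range.mp hm))
  have hP : ∀ j ∈ range M, T ^ j * (P j * X ^ (r - (j + 1))) ≤ G (j + 1) / 2 := by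
    intro j hj
    have := mul_le_mul_of_nonneg_left (hTPQ j hj).1
      (by positivity : 0 ≤ T ^ j * X ^ (r - (j + 1)))
    simp only [hGdef, Nat.cast_succ, pow_succ]
    linarith
  have hQ' : ∑ j ∈ range M, T ^ j * (Q j * X ^ (r - M)) ≤ G M / 2 :=
    calc ∑ j ∈ range M, T ^ j * (Q j * X ^ (r - M))
        ≤ ∑ j ∈ range M, T ^ (M - 1) * (Q j * X ^ (r - M)) :=
          sum_le_sum fun j hj => mul_le_mul_of_nonneg_right
            (pow_le_pow_right₀ hT (by have := mem_range.mp hj; omega))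
            (mul_nonneg (hQ j hj) (by positivity))
      _ = T ^ (M - 1) * X ^ (r - M) * ∑ j ∈ range M, Q j := by
          rw [← mul_sum, ← sum_mul]; ring
      _ ≤ T ^ (M - 1) * X ^ (r - M) * (T * (1 - ρ M) / 2) := by
          gcongr
          linarith [(hTPQ 0 (mem_range.2 hM)).2]
      _ = G M / 2 := by
          simp only [hGdef]
          rw [← pow_sub_one_mul hM.ne' T]
          ring
  have hGM : G M ≤ ∑ j ∈ range M, G (j + 1) := by
    have := single_le_sum (f := fun j => G (j + 1)) (fun j hj => hG _ (by
      have := mem_range.mp hj; omega)) (mem_range.2 (Nat.sub_lt hM one_pos))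
    rwa [show M - 1 + 1 = M by omega] at this
  have hGN : ∑ j ∈ range M, G (j + 1) + G 0 ≤ ∑ j ∈ range (N + 1), G j := by
    rw [← sum_range_succ']
    exact sum_le_sum_of_subset_of_nonneg (range_subset_range.2 (by omega))
      fun m hm _ => hG m (Nat.lt_succ_iff.mp (mem_range.mp hm))
  have hP' := sum_le_sum hP
  rw [← sum_div] at hP'
  simp only [mul_add, sum_add_distrib]
  linarith [hG 0 (Nat.zero_le N)]

end rpowSum

lemma exists_absorbing_scale (M : ℕ) (ρ P Q : ℕ → ℝ)
    (hρ : ∀ m, 1 ≤ m → m ≤ M → ρ m < 1) :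
    ∃ T, 1 ≤ T ∧ ∀ j ∈ range M,
      2 * P j ≤ T * (1 - ρ (j + 1)) ∧ 2 * ∑ i ∈ range M, Q i ≤ T * (1 - ρ M) := by
  have hlarge : ∀ c δ : ℝ, 0 < δ → ∀ᶠ T in Filter.atTop, c ≤ T * δ := fun c δ hδ =>
    (Filter.tendsto_id.atTop_mul_const hδ).eventually_ge_atTop c
  refine ((Filter.eventually_ge_atTop 1).and ((Filter.eventually_all_finset _).2
    fun j hj => (hlarge _ _ ?_).and (hlarge _ _ ?_))).exists
  · have := mem_range.mp hj
    linarith [hρ (j + 1) (by omega) (by omega)]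
  · have := mem_range.mp hj
    linarith [hρ M (by omega) le_rfl]

section Moments

variable {Ω : Type*} [MeasurableSpace Ω] {μ : Measure Ω} {f g : Ω → ℝ}

lemma aemeasurable_of_integrable_rpow {r : ℝ} (hf0 : ∀ ω, 0 ≤ f ω) (hr : r ≠ 0)
    (h : Integrable (fun ω => f ω ^ r) μ) : AEMeasurable f μ := by
  have : f = fun ω => (f ω ^ r) ^ r⁻¹ := funext fun ω => (Real.rpow_rpow_inv (hf0 ω) hr).symm
  rw [this]
  exact h.aemeasurable.pow_const _

lemma integrable_rpow_mul_of_le {p q : ℝ} (hf0 : ∀ ω, 0 ≤ f ω) (hf : AEMeasurable f μ)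
    (hg0 : ∀ ω, 0 ≤ g ω) (hg : Integrable g μ) (hfg : Integrable (fun ω => f ω ^ q * g ω) μ)
    (hp : 0 ≤ p) (hpq : p ≤ q) : Integrable (fun ω => f ω ^ p * g ω) μ := by
  refine (hg.add hfg).mono' ((hf.pow_const p).aestronglyMeasurable.mul hg.aestronglyMeasurable)
    (ae_of_all _ fun ω => ?_)
  have := mul_le_mul_of_nonneg_right (rpow_le_one_add_rpow (hf0 ω) hp hpq) (hg0 ω)
  rw [Real.norm_of_nonneg (mul_nonneg (Real.rpow_nonneg (hf0 ω) p) (hg0 ω)), Pi.add_apply]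
  linarith

lemma integrable_rpow_of_le [IsFiniteMeasure μ] {p q : ℝ} (hf0 : ∀ ω, 0 ≤ f ω)
    (hf : AEMeasurable f μ) (h : Integrable (fun ω => f ω ^ q) μ) (hp : 0 ≤ p) (hpq : p ≤ q) :
    Integrable (fun ω => f ω ^ p) μ := by
  simpa using integrable_rpow_mul_of_le hf0 hf (fun _ => zero_le_one) (integrable_const 1)
    (by simpa using h) hp hpq

lemma integrable_rpow_mul_pow_of_le [IsFiniteMeasure μ] {r p : ℝ} {k : ℕ}
    (hf0 : ∀ ω, 0 ≤ f ω) (hf : AEMeasurable f μ) (hg0 : ∀ ω, 0 ≤ g ω) (hg : AEMeasurable g μ)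
    (hgr : Integrable (fun ω => g ω ^ r) μ)
    (hfg : Integrable (fun ω => f ω ^ (r - k) * g ω ^ k) μ) (hp : 0 ≤ p) (hpk : p ≤ r - k) :
    Integrable (fun ω => f ω ^ p * g ω ^ k) μ := by
  have hgk : Integrable (fun ω => g ω ^ k) μ := by
    simpa only [Real.rpow_natCast] using
      integrable_rpow_of_le hg0 hg hgr (Nat.cast_nonneg k) (by linarith)
  exact integrable_rpow_mul_of_le hf0 hf (fun ω => pow_nonneg (hg0 ω) k) hgk hfg hp hpk

lemma integral_rpow_le_one [IsProbabilityMeasure μ] {r s : ℝ} (hr1 : ∫ ω, f ω ^ r ∂μ ≤ 1)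
    (hs1 : ∀ s : ℝ, 0 < s → s < r → ∫ ω, f ω ^ s ∂μ < 1) (hs0 : 0 ≤ s) (hsr : s ≤ r) :
    ∫ ω, f ω ^ s ∂μ ≤ 1 := by
  rcases hs0.eq_or_lt with rfl | hs0
  · simp
  rcases hsr.eq_or_lt with rfl | hsr
  exacts [hr1, (hs1 s hs0 hsr).le]

variable {r T X : ℝ} {N M : ℕ}

lemma integrable_rpowSum (hf : ∀ j ≤ N, Integrable (fun ω => f ω ^ (r - j)) μ) :
    Integrable (fun ω => rpowSum r T N (f ω)) μ :=
  integrable_finsetSum _ fun j hj => (hf j (Nat.lt_succ_iff.mp (mem_range.mp hj))).const_mul _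

lemma integral_rpowSum_mul (hf0 : ∀ ω, 0 ≤ f ω) (hX : 0 ≤ X)
    (hf : ∀ j ≤ N, Integrable (fun ω => f ω ^ (r - j)) μ) :
    ∫ ω, rpowSum r T N (f ω * X) ∂μ =
      ∑ j ∈ range (N + 1), T ^ j * (∫ ω, f ω ^ (r - j) ∂μ) * X ^ (r - j) := by
  simp_rw [rpowSum_mul (hf0 _) hX]
  rw [integral_finsetSum _ fun j hj =>
    (hf j (Nat.lt_succ_iff.mp (mem_range.mp hj))).const_mul _]
  exact sum_congr rfl fun j _ => by rw [integral_const_mul]; ring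

lemma integrable_crossSum_mul (hf0 : ∀ ω, 0 ≤ f ω) (hX : 0 ≤ X)
    (h₁ : ∀ j ∈ range M, Integrable (fun ω => f ω ^ (r - (j + 1)) * g ω) μ)
    (h₂ : ∀ j ∈ range M, Integrable (fun ω => f ω ^ (r - M) * g ω ^ (M - j)) μ) :
    Integrable (fun ω => crossSum r T M (f ω * X) (g ω)) μ := by
  simp_rw [crossSum_mul (hf0 _) hX]
  exact integrable_finsetSum _ fun j hj => ((h₁ j hj).const_mul _).add ((h₂ j hj).const_mul _)

lemma integral_crossSum_mul (hf0 : ∀ ω, 0 ≤ f ω) (hX : 0 ≤ X)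
    (h₁ : ∀ j ∈ range M, Integrable (fun ω => f ω ^ (r - (j + 1)) * g ω) μ)
    (h₂ : ∀ j ∈ range M, Integrable (fun ω => f ω ^ (r - M) * g ω ^ (M - j)) μ) :
    ∫ ω, crossSum r T M (f ω * X) (g ω) ∂μ = ∑ j ∈ range M, T ^ j *
      ((r - j) * 2 ^ (r - (j + 1)) * (∫ ω, f ω ^ (r - (j + 1)) * g ω ∂μ) * X ^ (r - (j + 1)) +
        (r - j) * 2 ^ (r - (j + 1)) * (∫ ω, f ω ^ (r - M) * g ω ^ (M - j) ∂μ) * X ^ (r - M)) := by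
  simp_rw [crossSum_mul (hf0 _) hX]
  rw [integral_finsetSum _ fun j hj => ?int]
  case int => exact ((h₁ j hj).const_mul _).add ((h₂ j hj).const_mul _)
  refine sum_congr rfl fun j hj => ?_
  rw [integral_add ((h₁ j hj).const_mul _) ((h₂ j hj).const_mul _), integral_const_mul,
    integral_const_mul]
  ring

end Moments

section Lyapunov

variable {Ω : Type*} [MeasurableSpace Ω] {μ : Measure Ω} {A B : Ω → ℝ} {r T : ℝ} {N M : ℕ}

lemma integral_rpowSum_le_add (hA0 : ∀ ω, 0 ≤ A ω) (hB0 : ∀ ω, 0 ≤ B ω) (hT : 0 ≤ T)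
    (hN : (N : ℝ) ≤ r) (hMN : M ≤ N) (hM : (M : ℝ) < r) (hrM : r ≤ M + 1)
    (hA : ∀ j ≤ N, Integrable (fun ω => A ω ^ (r - j)) μ)
    (hB : ∀ j ≤ N, Integrable (fun ω => B ω ^ (r - j)) μ)
    (hAB₁ : ∀ j ∈ range M, Integrable (fun ω => A ω ^ (r - (j + 1)) * B ω) μ)
    (hAB₂ : ∀ j ∈ range M, Integrable (fun ω => A ω ^ (r - M) * B ω ^ (M - j)) μ)
    {X : ℝ} (hX : 0 ≤ X) {Y : Ω → ℝ} (hY0 : ∀ ω, 0 ≤ Y ω) (hY : ∀ ω, Y ω ≤ A ω * X + B ω) :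
    ∫ ω, rpowSum r T N (Y ω) ∂μ ≤ ∫ ω, rpowSum r T N (A ω * X) ∂μ +
      ∫ ω, rpowSum r T N (B ω) ∂μ + ∫ ω, crossSum r T M (A ω * X) (B ω) ∂μ := by
  have hAX : Integrable (fun ω => rpowSum r T N (A ω * X)) μ := integrable_rpowSum fun j hj => by
    simpa only [Real.mul_rpow (hA0 _) hX] using (hA j hj).mul_const (X ^ (r - j))
  have hAXB : Integrable (fun ω => rpowSum r T N (A ω * X) + rpowSum r T N (B ω)) μ :=
    hAX.add (integrable_rpowSum hB)
  have hcross := integrable_crossSum_mul (T := T) hA0 hX hAB₁ hAB₂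
  rw [← integral_add hAX (integrable_rpowSum hB), ← integral_add hAXB hcross]
  refine integral_mono_of_nonneg (ae_of_all _ fun ω => rpowSum_nonneg hT (hY0 ω))
    (hAXB.add hcross) (ae_of_all _ fun ω => ?_)
  exact (rpowSum_mono hT hN (hY0 ω) (hY ω)).trans
    (rpowSum_add_le hT hN hMN hM hrM (mul_nonneg (hA0 ω) hX) (hB0 ω))

end Lyapunov

lemma cast_ceil_sub_one_lt {r : ℝ} (hr : 0 < r) : ((⌈r⌉₊ - 1 : ℕ) : ℝ) < r := by
  have := Nat.one_le_ceil_iff.mpr hr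
  rw [Nat.cast_sub this, Nat.cast_one]
  linarith [Nat.ceil_lt_add_one hr.le]

lemma le_cast_ceil_sub_one_add_one (r : ℝ) : r ≤ ((⌈r⌉₊ - 1 : ℕ) : ℝ) + 1 :=
  (Nat.le_ceil r).trans (by exact_mod_cast (by omega : ⌈r⌉₊ ≤ ⌈r⌉₊ - 1 + 1))

theorem exists_integral_rpowSum_le {Ω : Type*} [MeasurableSpace Ω] {μ : Measure Ω}
    [IsProbabilityMeasure μ] {A B : Ω → ℝ} {r : ℝ} (hr : 0 < r) (hA0 : ∀ ω, 0 ≤ A ω)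
    (hB0 : ∀ ω, 0 ≤ B ω) (hAr : Integrable (fun ω => A ω ^ r) μ)
    (hAr1 : ∫ ω, A ω ^ r ∂μ ≤ 1) (hAs1 : ∀ s : ℝ, 0 < s → s < r → ∫ ω, A ω ^ s ∂μ < 1)
    (hBr : Integrable (fun ω => B ω ^ r) μ)
    (hAB : ∀ k : ℕ, k ≤ ⌊r⌋₊ → Integrable (fun ω => A ω ^ (r - k) * B ω ^ k) μ) :
    ∃ T, 1 ≤ T ∧ ∀ X, 0 ≤ X → ∀ Y : Ω → ℝ, (∀ ω, 0 ≤ Y ω) → (∀ ω, Y ω ≤ A ω * X + B ω) →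
      ∫ ω, rpowSum r T ⌊r⌋₊ (Y ω) ∂μ ≤ rpowSum r T ⌊r⌋₊ X + ∫ ω, rpowSum r T ⌊r⌋₊ (B ω) ∂μ := by
  set N := ⌊r⌋₊
  set M := ⌈r⌉₊ - 1
  have hN : (N : ℝ) ≤ r := Nat.floor_le hr.le
  have hM : (M : ℝ) < r := cast_ceil_sub_one_lt hr
  have hrM : r ≤ M + 1 := le_cast_ceil_sub_one_add_one r
  have hMN : M ≤ N := by have := Nat.ceil_le_floor_add_one r; omega
  have hjr : ∀ j ≤ N, (j : ℝ) ≤ r := fun j hj => (Nat.cast_le.2 hj).trans hN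
  have hAm := aemeasurable_of_integrable_rpow hA0 hr.ne' hAr
  have hBm := aemeasurable_of_integrable_rpow hB0 hr.ne' hBr
  have hAB₁ : ∀ j ∈ range M, Integrable (fun ω => A ω ^ (r - (j + 1)) * B ω) μ := fun j hj => by
    have hjM : (j : ℝ) + 1 ≤ M := by exact_mod_cast mem_range.mp hj
    simpa using integrable_rpow_mul_pow_of_le (k := 1) hA0 hAm hB0 hBm hBr
      (hAB 1 (by have := mem_range.mp hj; omega)) (by linarith) (by push_cast; linarith)
  have hAB₂ : ∀ j ∈ range M, Integrable (fun ω => A ω ^ (r - M) * B ω ^ (M - j)) μ := fun j hj =>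
    integrable_rpow_mul_pow_of_le hA0 hAm hB0 hBm hBr (hAB _ (by omega)) (by linarith)
      (by push_cast [Nat.cast_sub (mem_range.mp hj).le]; linarith [(j.cast_nonneg : (0 : ℝ) ≤ j)])
  obtain ⟨T, hT1, hT⟩ := exists_absorbing_scale M (fun m => ∫ ω, A ω ^ (r - m) ∂μ)
    (fun j => (r - j) * 2 ^ (r - (j + 1)) * ∫ ω, A ω ^ (r - (j + 1)) * B ω ∂μ)
    (fun j => (r - j) * 2 ^ (r - (j + 1)) * ∫ ω, A ω ^ (r - M) * B ω ^ (M - j) ∂μ)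
    fun m hm1 hmM => hAs1 _ (by linarith [(Nat.cast_le (α := ℝ)).2 hmM])
      (by linarith [(Nat.one_le_cast (α := ℝ)).2 hm1])
  refine ⟨T, hT1, fun X hX Y hY0 hY => ?_⟩
  have hA : ∀ j ≤ N, Integrable (fun ω => A ω ^ (r - j)) μ := fun j hj =>
    integrable_rpow_of_le hA0 hAm hAr (by linarith [hjr j hj]) (by linarith)
  have h := integral_rpowSum_le_add hA0 hB0 (zero_le_one.trans hT1) hN hMN hM hrM hA
    (fun j hj => integrable_rpow_of_le hB0 hBm hBr (by linarith [hjr j hj]) (by linarith))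
    hAB₁ hAB₂ hX hY0 hY
  rw [integral_rpowSum_mul hA0 hX hA, integral_crossSum_mul hA0 hX hAB₁ hAB₂] at h
  have hQ : ∀ j ∈ range M,
      0 ≤ (r - j) * 2 ^ (r - (j + 1)) * ∫ ω, A ω ^ (r - M) * B ω ^ (M - j) ∂μ := fun j hj => by
    have : (j : ℝ) < M := by exact_mod_cast mem_range.mp hj
    exact mul_nonneg (mul_nonneg (by linarith) (by positivity)) (integral_nonneg fun ω =>
      mul_nonneg (Real.rpow_nonneg (hA0 ω) _) (pow_nonneg (hB0 ω) _))
  linarith [sum_rpow_add_sum_cross_le (r := r) hT1 hMN hX _ _ _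
    (fun j hj => (integral_rpow_le_one hAr1 hAs1 (by linarith [hjr j hj]) (by linarith) :
      ∫ ω, A ω ^ (r - j) ∂μ ≤ 1)) hQ hT]

theorem stmt19_general {Ω : Type*} [MeasureSpace Ω] [IsProbabilityMeasure (ℙ : Measure Ω)]
    (d : ℕ) (r : ℝ) (hr : 0 < r)
    (U : Ω → Matrix (Fin d) (Fin d) ℝ) (V : Ω → EuclideanSpace ℝ (Fin d))
    (hUr : Integrable (fun ω => opN (U ω) ^ r) ℙ)
    (hUr1 : ∫ (ω : Ω), opN (U ω) ^ r ∂ℙ ≤ 1)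
    (hUs1 : ∀ s : ℝ, 0 < s → s < r → ∫ (ω : Ω), opN (U ω) ^ s ∂ℙ < 1)
    (hVr : Integrable (fun ω => ‖V ω‖ ^ r) ℙ)
    (hUV : ∀ k : ℕ, k ≤ ⌊r⌋₊ →
      Integrable (fun ω => opN (U ω) ^ (r - k) * ‖V ω‖ ^ k) ℙ) :
    ∃ c : ℕ → ℝ, (∀ k, 1 ≤ k → k ≤ ⌊r⌋₊ → 0 < c k) ∧
      ∀ x : EuclideanSpace ℝ (Fin d),
        (∫ (ω : Ω), lyapG r c (Matrix.toEuclideanCLM (𝕜 := ℝ) (U ω) x + V ω) ∂ℙ)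
            - lyapG r c x
          ≤ ∫ (ω : Ω), lyapG r c (V ω) ∂ℙ := by
  obtain ⟨T, hT1, hT⟩ := exists_integral_rpowSum_le (A := fun ω => opN (U ω))
    (B := fun ω => ‖V ω‖) hr (fun _ => norm_nonneg _) (fun _ => norm_nonneg _) hUr hUr1 hUs1 hVr hUV
  refine ⟨(T ^ ·), fun k _ _ => by positivity, fun x => ?_⟩
  have := hT ‖x‖ (norm_nonneg x) _ (fun _ => norm_nonneg _) fun ω =>
    norm_add_le_of_le ((Matrix.toEuclideanCLM (𝕜 := ℝ) (U ω)).le_opNorm x) le_rfl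
  simp only [lyapG_pow_eq_rpowSum]
  linarith

theorem stmt19 {Ω : Type*} [MeasureSpace Ω] [IsProbabilityMeasure (ℙ : Measure Ω)]
    (d : ℕ) (r : ℝ) (hr : 0 < r)
    (U : Ω → Matrix (Fin d) (Fin d) ℝ) (V : Ω → EuclideanSpace ℝ (Fin d))
    (hUr : Integrable (fun ω => opN (U ω) ^ r) ℙ)
    (hUr1 : ∫ (ω : Ω), opN (U ω) ^ r ∂ℙ ≤ 1)
    (hUs : ∀ s : ℝ, 0 < s → s < r → Integrable (fun ω => opN (U ω) ^ s) ℙ)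
    (hUs1 : ∀ s : ℝ, 0 < s → s < r → ∫ (ω : Ω), opN (U ω) ^ s ∂ℙ < 1)
    (hVr : Integrable (fun ω => ‖V ω‖ ^ r) ℙ)
    (hVpos : 0 < ∫ (ω : Ω), ‖V ω‖ ^ r ∂ℙ)
    (hUV : ∀ k : ℕ, k ≤ ⌊r⌋₊ →
      Integrable (fun ω => opN (U ω) ^ (r - k) * ‖V ω‖ ^ k) ℙ) :
    ∃ c : ℕ → ℝ, (∀ k, 1 ≤ k → k ≤ ⌊r⌋₊ → 0 < c k) ∧
      ∀ x : EuclideanSpace ℝ (Fin d),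
        (∫ (ω : Ω), lyapG r c (Matrix.toEuclideanCLM (𝕜 := ℝ) (U ω) x + V ω) ∂ℙ)
            - lyapG r c x
          ≤ ∫ (ω : Ω), lyapG r c (V ω) ∂ℙ :=
  stmt19_general d r hr U V hUr hUr1 hUs1 hVr hUV
end
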